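/- arXiv:1901.06900 — 3 statements merged into one kernel-verified Lean document; each statement's English description precedes it below -/
import Mathlib

section
/- Let K be a family of pairwise disjoint intervals in the full binary tree, all of the same length n. Then almost surely (with respect to the coin-tossing measure on branches), if a branch visits sources of K infinitely often, then it visits targets of K infinitely often. -/
open MeasureTheory ENNReal

/-- The cylinder of branches extending the finite word `x`. -/
def cylinder (x : List Bool) : Set (ℕ → Bool) :=
  {π | ∀ i : Fin x.length, π i = x.get i}

/-- A branch visits the set of nodes `S` infinitely often. -/
def visitsIO (S : Set (List Bool)) (π : ℕ → Bool) : Prop :=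
  {z ∈ S | π ∈ cylinder z}.Infinite

/-- The set of nodes of the interval `[p.1, p.2]`. -/
def intervalSet (p : List Bool × List Bool) : Set (List Bool) :=
  {z | p.1 <+: z ∧ z <+: p.2}

/-- The length of an interval: the number of nodes strictly between source and target. -/
def intervalLen (p : List Bool × List Bool) : ℕ :=
  p.2.length - p.1.length - 1

/-- A family of pairwise disjoint intervals in the full binary tree. -/
def IsIntervalFamily (I : Set (List Bool × List Bool)) : Prop :=
  (∀ p ∈ I, p.1 <+: p.2 ∧ p.1 ≠ p.2) ∧
  (∀ p ∈ I, ∀ q ∈ I, p ≠ q → intervalSet p ∩ intervalSet q = ∅)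

/-- An interval of the family is a record breaker if it is strictly longer than all
intervals of the family whose sources are strict ancestors of its source. -/
def RecordBreaker (I : Set (List Bool × List Bool)) (p : List Bool × List Bool) : Prop :=
  p ∈ I ∧ ∀ q ∈ I, (q.1 <+: p.1 ∧ q.1 ≠ p.1) → intervalLen q < intervalLen p

/-! After the source `x` of an interval `[x, y]` of `K`, a branch reaches the target `y` with
conditional probability `2⁻¹ ^ (n + 1)`. If it misses `y`, it continues in
`cylinder x \ cylinder y`, and by disjointness of the intervals every later source it meets lies
in one of the pairwise disjoint cylinders of the first sources of `laterIntervals K (x, y)`.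
Induction on `k` thus bounds the probability of meeting more than `k` sources below `x` and
missing all their targets by `(1 - 2⁻¹ ^ (n + 1)) ^ (k + 1)` times the measure of `cylinder x`.
A branch that visits infinitely many sources but finitely many targets lies in all these events
for some source past its last visited target, so such branches form a null set. -/

section Cylinder

variable {x y : List Bool} {π : ℕ → Bool}

lemma cylinder_subset_cylinder (h : x <+: y) : cylinder y ⊆ cylinder x := by
  intro π hπ i
  have h1 := hπ ⟨i, lt_of_lt_of_le i.isLt h.length_le⟩
  simp only [List.get_eq_getElem] at h1 ⊢
  rw [h1]
  exact (h.getElem i.isLt).symm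

lemma prefix_of_mem_cylinder (hx : π ∈ cylinder x) (hy : π ∈ cylinder y)
    (h : x.length ≤ y.length) : x <+: y := by
  have hx' : x = y.take x.length := by
    apply List.ext_getElem
    · simp [h]
    · intro i h1 h2
      have e1 := hx ⟨i, h1⟩
      have e2 := hy ⟨i, lt_of_lt_of_le h1 h⟩
      simp only [List.get_eq_getElem] at e1 e2
      rw [List.getElem_take, ← e2, ← e1]
  rw [hx']
  exact List.take_prefix _ _

lemma disjoint_cylinder (hxy : ¬ x <+: y) (hyx : ¬ y <+: x) :
    Disjoint (cylinder x) (cylinder y) := by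
  rw [Set.disjoint_left]
  intro π hx hy
  rcases le_total x.length y.length with h | h
  · exact hxy (prefix_of_mem_cylinder hx hy h)
  · exact hyx (prefix_of_mem_cylinder hy hx h)

lemma injOn_length_setOf_mem_cylinder (π : ℕ → Bool) :
    Set.InjOn List.length {x | π ∈ cylinder x} :=
  fun _ hx _ hy h => (prefix_of_mem_cylinder hx hy h.le).eq_of_length h

lemma measurableSet_cylinder (x : List Bool) : MeasurableSet (cylinder x) := by
  have : _root_.cylinder x = ⋂ i : Fin x.length, (fun π : ℕ → Bool => π i) ⁻¹' {x.get i} := by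
    ext π
    simp [_root_.cylinder]
  rw [this]
  exact MeasurableSet.iInter fun i => measurable_pi_apply (i : ℕ) (measurableSet_singleton _)

lemma measure_cylinder_diff_cylinder {μ : Measure (ℕ → Bool)}
    (hμ : ∀ x : List Bool, μ (cylinder x) = (2 : ℝ≥0∞)⁻¹ ^ x.length) (h : x <+: y) :
    μ (cylinder x \ cylinder y) =
      (1 - (2 : ℝ≥0∞)⁻¹ ^ (y.length - x.length)) * μ (cylinder x) := by
  have hy : y.length = x.length + (y.length - x.length) := by
    have := h.length_le
    omega
  rw [measure_sdiff (cylinder_subset_cylinder h) (measurableSet_cylinder _).nullMeasurableSet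
      (by rw [hμ]; exact pow_ne_top (by simp)),
    hμ, hμ, ENNReal.sub_mul fun _ _ => pow_ne_top (by simp), one_mul, hy, pow_add,
    Nat.add_sub_cancel_left, mul_comm]

lemma measure_le_mul_of_subset_biUnion {ι : Type*} [Countable ι] (μ : Measure (ℕ → Bool))
    {s : Set ι} {x : ι → List Bool} (hs : s.PairwiseDisjoint fun i => cylinder (x i))
    {S T : Set (ℕ → Bool)} {E : ι → Set (ℕ → Bool)} {r : ℝ≥0∞}
    (hS : S ⊆ ⋃ i ∈ s, E i) (hE : ∀ i ∈ s, μ (E i) ≤ r * μ (cylinder (x i)))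
    (hT : ∀ i ∈ s, cylinder (x i) ⊆ T) : μ S ≤ r * μ T :=
  calc μ S ≤ ∑' i : s, μ (E i) := (measure_mono hS).trans (measure_biUnion_le μ s.to_countable E)
    _ ≤ ∑' i : s, r * μ (cylinder (x i)) := ENNReal.tsum_le_tsum fun i => hE i i.2
    _ = r * μ (⋃ i ∈ s, cylinder (x i)) := by
      rw [ENNReal.tsum_mul_left,
        measure_biUnion s.to_countable hs fun i _ => measurableSet_cylinder (x i)]
    _ ≤ r * μ T := by gcongr; exact Set.iUnion₂_subset hT

end Cylinder

section FirstSources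

def firstSources (P : Set (List Bool × List Bool)) : Set (List Bool × List Bool) :=
  {p ∈ P | ∀ q ∈ P, q.1 <+: p.1 → q.1 = p.1}

variable {P : Set (List Bool × List Bool)}

lemma pairwiseDisjoint_firstSources (hP : Set.InjOn Prod.fst P) :
    (firstSources P).PairwiseDisjoint fun p => cylinder p.1 := by
  intro p hp q hq hne
  apply disjoint_cylinder
  · exact fun h => hne (hP hp.1 hq.1 (hq.2 p hp.1 h))
  · exact fun h => hne (hP hp.1 hq.1 (hp.2 q hq.1 h).symm)

lemma exists_mem_firstSources_mem_cylinder {π : ℕ → Bool}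
    (h : ∃ q ∈ P, π ∈ cylinder q.1) :
    ∃ p ∈ firstSources P, π ∈ cylinder p.1 ∧ ∀ q ∈ P, π ∈ cylinder q.1 → p.1 <+: q.1 := by
  obtain ⟨p, ⟨hpP, hπp⟩, hmin⟩ := (measure fun q : List Bool × List Bool => q.1.length).wf.has_min
    {q | q ∈ P ∧ π ∈ cylinder q.1} h
  have hfirst : ∀ q ∈ P, π ∈ cylinder q.1 → p.1 <+: q.1 := fun q hqP hπq =>
    prefix_of_mem_cylinder hπp hπq (not_lt.mp (hmin q ⟨hqP, hπq⟩))
  refine ⟨p, ⟨hpP, fun q hqP hqp => ?_⟩, hπp, hfirst⟩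
  exact hqp.eq_of_length (hqp.length_le.antisymm
    (hfirst q hqP (cylinder_subset_cylinder hqp hπp)).length_le)

end FirstSources

section MissEvent

variable (K : Set (List Bool × List Bool))

def visitedSourcesFrom (x : List Bool) (π : ℕ → Bool) : Set (List Bool × List Bool) :=
  {p ∈ K | x <+: p.1 ∧ π ∈ cylinder p.1}

def missEvent (k : ℕ) (x : List Bool) : Set (ℕ → Bool) :=
  {π | π ∈ cylinder x ∧ (k : ℕ∞) < (visitedSourcesFrom K x π).encard ∧
    ∀ p ∈ visitedSourcesFrom K x π, π ∉ cylinder p.2}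

def laterIntervals (p : List Bool × List Bool) : Set (List Bool × List Bool) :=
  {q ∈ K | q ≠ p ∧ p.1 <+: q.1 ∧ ¬ p.2 <+: q.1}

variable {K} {p : List Bool × List Bool}

lemma missEvent_zero_subset (hp : p ∈ K) : missEvent K 0 p.1 ⊆ cylinder p.1 \ cylinder p.2 :=
  fun _ hπ => ⟨hπ.1, hπ.2.2 p ⟨hp, List.prefix_refl _, hπ.1⟩⟩

lemma missEvent_succ_subset (hp : p ∈ K) (k : ℕ) :
    missEvent K (k + 1) p.1 ⊆ ⋃ q ∈ firstSources (laterIntervals K p), missEvent K k q.1 := by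
  rintro π ⟨hπp, hcard, hmiss⟩
  have hpV : p ∈ visitedSourcesFrom K p.1 π := ⟨hp, List.prefix_refl _, hπp⟩
  have hlater : visitedSourcesFrom K p.1 π \ {p} ⊆ laterIntervals K p :=
    fun r ⟨⟨hrK, hpr, hπr⟩, hrp⟩ =>
      ⟨hrK, hrp, hpr, fun h => hmiss p hpV (cylinder_subset_cylinder h hπr)⟩
  have hcard' : (k : ℕ∞) < (visitedSourcesFrom K p.1 π \ {p}).encard := by
    rw [← Set.encard_sdiff_singleton_add_one hpV, Nat.cast_succ] at hcard
    exact (ENat.add_lt_add_iff_right ENat.one_ne_top).mp hcard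
  obtain ⟨r, hr⟩ := Set.encard_pos.mp (hcard'.trans_le' bot_le)
  obtain ⟨q, hq, hπq, hfirst⟩ :=
    exists_mem_firstSources_mem_cylinder ⟨r, hlater hr, hr.1.2.2⟩
  refine Set.mem_biUnion hq ⟨hπq, hcard'.trans_le (Set.encard_le_encard fun r hr => ?_), ?_⟩
  · exact ⟨hr.1.1, hfirst r (hlater hr) hr.1.2.2, hr.1.2.2⟩
  · exact fun r hr => hmiss r ⟨hr.1, hq.1.2.2.1.trans hr.2.1, hr.2.2⟩

end MissEvent

namespace IsIntervalFamily

variable {K : Set (List Bool × List Bool)} (hK : IsIntervalFamily K) {p : List Bool × List Bool}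

include hK

lemma eq_of_fst_mem_intervalSet {q : List Bool × List Bool} (hp : p ∈ K) (hq : q ∈ K)
    (h : q.1 ∈ intervalSet p) : p = q := by
  by_contra hne
  have hqq : q.1 ∈ intervalSet q := ⟨List.prefix_refl _, (hK.1 q hq).1⟩
  exact (hK.2 p hp q hq hne).subset ⟨h, hqq⟩

lemma injOn_fst : Set.InjOn Prod.fst K := fun a ha _ hb h =>
  hK.eq_of_fst_mem_intervalSet ha hb ⟨h ▸ List.prefix_refl _, h ▸ (hK.1 a ha).1⟩

lemma length_snd (hp : p ∈ K) : p.2.length = p.1.length + intervalLen p + 1 := by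
  have hle := (hK.1 p hp).1.length_le
  have hne : p.1.length ≠ p.2.length := fun h => (hK.1 p hp).2 ((hK.1 p hp).1.eq_of_length h)
  unfold intervalLen
  omega

lemma cylinder_subset_of_mem_laterIntervals {q : List Bool × List Bool} (hp : p ∈ K)
    (hq : q ∈ laterIntervals K p) : cylinder q.1 ⊆ cylinder p.1 \ cylinder p.2 := by
  obtain ⟨hqK, hqp, hpq, hpq₂⟩ := hq
  have hqp₂ : ¬ q.1 <+: p.2 := fun h =>
    hqp (hK.eq_of_fst_mem_intervalSet hp hqK ⟨hpq, h⟩).symm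
  exact fun π hπ => ⟨cylinder_subset_cylinder hpq hπ,
    Set.disjoint_left.mp (disjoint_cylinder hqp₂ hpq₂) hπ⟩

lemma setOf_visitsIO_fst_not_visitsIO_snd_subset :
    {π | visitsIO (Prod.fst '' K) π ∧ ¬ visitsIO (Prod.snd '' K) π} ⊆
      ⋃ p ∈ K, ⋂ k, missEvent K k p.1 := by
  rintro π ⟨hsrc, htgt⟩
  set V := {q | q ∈ K ∧ π ∈ cylinder q.1}
  have hV : V.Infinite := by
    refine Set.Infinite.of_image Prod.fst (hsrc.mono ?_)
    rintro _ ⟨⟨q, hq, rfl⟩, hπq⟩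
    exact ⟨q, ⟨hq, hπq⟩, rfl⟩
  have hVinj : Set.InjOn (fun q => q.1.length) V :=
    (injOn_length_setOf_mem_cylinder π).comp (hK.injOn_fst.mono fun _ hq => hq.1)
      fun _ hq => hq.2
  have hfar : ∀ N, {q ∈ V | N ≤ q.1.length}.Infinite := by
    intro N
    have hnear : {q ∈ V | q.1.length < N}.Finite :=
      Set.Finite.of_finite_image ((Set.finite_Iio N).subset (by rintro _ ⟨q, hq, rfl⟩; exact hq.2))
        (hVinj.mono fun _ hq => hq.1)
    exact (hV.sdiff hnear).mono fun q hq => ⟨hq.1, not_lt.mp fun h => hq.2 ⟨hq.1, h⟩⟩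
  obtain ⟨m, hm⟩ := ((Set.not_infinite.mp htgt).image List.length).bddAbove
  obtain ⟨p, ⟨hp, hπp⟩, hpm⟩ := (hfar m).nonempty
  refine Set.mem_biUnion hp (Set.mem_iInter.2 fun k => ⟨hπp, ?_, ?_⟩)
  · have hinf : (visitedSourcesFrom K p.1 π).Infinite := (hfar p.1.length).mono fun q hq =>
      ⟨hq.1.1, prefix_of_mem_cylinder hπp hq.1.2 hq.2, hq.1.2⟩
    rw [hinf.encard_eq]
    exact ENat.natCast_lt_top k
  · rintro q ⟨hq, hpq, -⟩ hπq
    have hqm := hm ⟨q.2, ⟨⟨q, hq, rfl⟩, hπq⟩, rfl⟩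
    have hq₂ := hK.length_snd hq
    have hpq' := hpq.length_le
    omega

section Measure

variable {n : ℕ} (hlen : ∀ p ∈ K, intervalLen p = n) {μ : Measure (ℕ → Bool)}
  (hμ : ∀ x : List Bool, μ (cylinder x) = (2 : ℝ≥0∞)⁻¹ ^ x.length)

include hlen hμ

lemma measure_cylinder_diff_eq (hp : p ∈ K) :
    μ (cylinder p.1 \ cylinder p.2) = (1 - (2 : ℝ≥0∞)⁻¹ ^ (n + 1)) * μ (cylinder p.1) := by
  rw [measure_cylinder_diff_cylinder hμ (hK.1 p hp).1, hK.length_snd hp, hlen p hp]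
  congr 3
  omega

lemma measure_missEvent_le (k : ℕ) : ∀ p ∈ K,
    μ (missEvent K k p.1) ≤ (1 - (2 : ℝ≥0∞)⁻¹ ^ (n + 1)) ^ (k + 1) * μ (cylinder p.1) := by
  induction k with
  | zero =>
    intro p hp
    rw [zero_add, pow_one, ← hK.measure_cylinder_diff_eq hlen hμ hp]
    exact measure_mono (missEvent_zero_subset hp)
  | succ k ih =>
    intro p hp
    calc μ (missEvent K (k + 1) p.1)
        ≤ (1 - (2 : ℝ≥0∞)⁻¹ ^ (n + 1)) ^ (k + 1) * μ (cylinder p.1 \ cylinder p.2) :=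
          measure_le_mul_of_subset_biUnion μ
            (pairwiseDisjoint_firstSources (hK.injOn_fst.mono fun q hq => hq.1))
            (missEvent_succ_subset hp k) (fun q hq => ih q hq.1.1)
            (fun q hq => hK.cylinder_subset_of_mem_laterIntervals hp hq.1)
      _ = _ := by rw [hK.measure_cylinder_diff_eq hlen hμ hp, ← mul_assoc, ← pow_succ]

lemma measure_iInter_missEvent (hp : p ∈ K) : μ (⋂ k, missEvent K k p.1) = 0 := by
  have hlt : 1 - (2 : ℝ≥0∞)⁻¹ ^ (n + 1) < 1 :=
    ENNReal.sub_lt_self one_ne_top one_ne_zero (by simp)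
  have hlim : Filter.Tendsto
      (fun k => (1 - (2 : ℝ≥0∞)⁻¹ ^ (n + 1)) ^ (k + 1) * μ (cylinder p.1))
      Filter.atTop (nhds 0) := by
    simpa using ENNReal.Tendsto.mul_const
      ((ENNReal.tendsto_pow_atTop_nhds_zero_of_lt_one hlt).comp (Filter.tendsto_add_atTop_nat 1))
      (Or.inr (by rw [hμ]; exact pow_ne_top (by simp)))
  exact le_antisymm (ge_of_tendsto' hlim fun k => (measure_mono (Set.iInter_subset _ k)).trans
    (hK.measure_missEvent_le hlen hμ k p hp)) bot_le

end Measure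

end IsIntervalFamily

/-- If all intervals of a family have the same length `n`, then almost surely a branch
visiting the sources infinitely often also visits the targets infinitely often. -/
theorem const_length_sources_io_imp_targets_io (μ : Measure (ℕ → Bool))
    [IsProbabilityMeasure μ]
    (hμ : ∀ x : List Bool, μ (cylinder x) = (2 : ℝ≥0∞)⁻¹ ^ x.length)
    (K : Set (List Bool × List Bool)) (hK : IsIntervalFamily K) (n : ℕ)
    (hlen : ∀ p ∈ K, intervalLen p = n) :
    μ {π | visitsIO (Prod.fst '' K) π → visitsIO (Prod.snd '' K) π} = 1 := by
  have hbad : μ {π | visitsIO (Prod.fst '' K) π ∧ ¬ visitsIO (Prod.snd '' K) π} = 0 :=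
    measure_mono_null hK.setOf_visitsIO_fst_not_visitsIO_snd_subset
      ((measure_biUnion_null_iff K.to_countable).2 fun _ hp =>
        hK.measure_iInter_missEvent hlen hμ hp)
  rw [measure_congr (ae_eq_univ.2 ?_), measure_univ]
  simpa only [Set.compl_ofPred, Classical.not_imp] using hbad
end

section
/- For every d ≥ 1 there exists a vector sequence of dimension d that is not an asymptotic mix of any vector sequence of dimension d−1 (nor of any smaller dimension). -/
/-- `f` restricted to positions in `X` is bounded. -/
def BddOn (f : ℕ → ℕ) (X : Set ℕ) : Prop :=
  ∃ b, ∀ n ∈ X, f n ≤ b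

/-- Asymptotic equivalence of number sequences. -/
def AsymEquiv (f g : ℕ → ℕ) : Prop :=
  ∀ X : Set ℕ, BddOn f X ↔ BddOn g X

/-- A vector sequence: every vector is nonempty. -/
def IsVectorSeq (F : ℕ → List ℕ) : Prop :=
  ∀ n, F n ≠ []

/-- `f` is an extraction of the vector sequence `F`. -/
def Extraction (f : ℕ → ℕ) (F : ℕ → List ℕ) : Prop :=
  ∀ n, f n ∈ F n

/-- `F` is an asymptotic mix of `G`. -/
def IsMix (F G : ℕ → List ℕ) : Prop :=
  ∀ f, Extraction f F → ∃ g, Extraction g G ∧ AsymEquiv f g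

/-- The extraction picking the minimal component of each vector. -/
def minSeq (F : ℕ → List ℕ) (n : ℕ) : ℕ := ((F n).min?).getD 0

/-- The extraction picking the maximal component of each vector. -/
def maxSeq (F : ℕ → List ℕ) (n : ℕ) : ℕ := ((F n).max?).getD 0

/-!
Let `F` enumerate all of `ℕ^d`, and suppose it were a mix of `G` of dimension `e < d`. The
coordinate extractions `n ↦ F(n)_i` are then equivalent to extractions `g_i` of `G`, and on the
positions where `g_i = g_j` a bound on coordinate `i` transfers to a bound `Φ i j` on coordinate
`j`. Choose a vector `p` whose coordinates grow faster than all these transfer bounds, i.e.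
`Φ i j (p i) < p j` for `i < j`. At the position where `F` lists `p`, the `d` values `g_i` lie
among the `e < d` components of `G`, so two of them coincide, and the transfer bound between
them is violated.
-/

lemma AsymEquiv.exists_bound_of_eq {a b a' b' : ℕ → ℕ} (hab : AsymEquiv a b)
    (hab' : AsymEquiv a' b') (B : ℕ) : ∃ B', ∀ n, b n = b' n → a n ≤ B → a' n ≤ B' := by
  let X : Set ℕ := {n | b n = b' n ∧ a n ≤ B}
  obtain ⟨c, hc⟩ := (hab X).1 ⟨B, fun n hn => hn.2⟩
  obtain ⟨B', hB'⟩ := (hab' X).2 ⟨c, fun n hn => hn.1 ▸ hc n hn⟩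
  exact ⟨B', fun n h₁ h₂ => hB' n ⟨h₁, h₂⟩⟩

def dominatingVec {d : ℕ} (Φ : Fin d → Fin d → ℕ → ℕ) (j : Fin d) : ℕ :=
  Finset.univ.sup (fun i : Fin j => Φ (Fin.castLT i (i.2.trans j.2)) j
    (dominatingVec Φ (Fin.castLT i (i.2.trans j.2)))) + 1
termination_by j.val
decreasing_by exact i.2

lemma lt_dominatingVec {d : ℕ} (Φ : Fin d → Fin d → ℕ → ℕ) {i j : Fin d} (hij : i < j) :
    Φ i j (dominatingVec Φ i) < dominatingVec Φ j := by
  rw [dominatingVec.eq_1 Φ j, Nat.lt_succ_iff]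
  exact Finset.le_sup (f := fun i : Fin j => Φ (Fin.castLT i (i.2.trans j.2)) j
    (dominatingVec Φ (Fin.castLT i (i.2.trans j.2)))) (b := ⟨i, hij⟩) (Finset.mem_univ _)

lemma List.exists_ne_map_eq_of_length_lt {ι α : Type*} [Fintype ι] [DecidableEq α]
    {l : List α} (hl : l.length < Fintype.card ι) {f : ι → α} (hf : ∀ i, f i ∈ l) :
    ∃ i j, i ≠ j ∧ f i = f j := by
  obtain ⟨i, -, j, -, hij, heq⟩ := Finset.exists_ne_map_eq_of_card_lt_of_maps_to
    (t := l.toFinset) ((List.toFinset_card_le l).trans_lt hl) (fun i _ => by simpa using hf i)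
  exact ⟨i, j, hij, heq⟩

theorem exists_vector_seq_not_mix_of_lower_dim_general (d : ℕ) :
    ∃ F : ℕ → List ℕ, (∀ n, (F n).length = d) ∧
      ∀ (G : ℕ → List ℕ) (e : ℕ), 1 ≤ e → e < d →
        (∀ n, (G n).length = e) → ¬ IsMix F G := by
  obtain ⟨σ, hσ⟩ := exists_surjective_nat (Fin d → ℕ)
  refine ⟨fun n => List.ofFn (σ n), fun n => List.length_ofFn, ?_⟩
  intro G e _ hed hG hmix
  choose g hg hequiv using fun i : Fin d =>
    hmix (fun n => σ n i) fun n => List.mem_ofFn.mpr ⟨i, rfl⟩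
  choose Φ hΦ using fun i j => (hequiv i).exists_bound_of_eq (hequiv j)
  obtain ⟨n, hn⟩ := hσ (dominatingVec Φ)
  have distinct : ∀ i j, i < j → g i n ≠ g j n := fun i j hij heq =>
    (lt_dominatingVec Φ hij).not_ge (hn ▸ hΦ i j _ n heq (hn ▸ le_rfl))
  obtain ⟨i, j, hij, heq⟩ := List.exists_ne_map_eq_of_length_lt (l := G n)
    (by simpa [hG n] using hed) (fun i => hg i n)
  rcases hij.lt_or_gt with h | h
  · exact distinct i j h heq
  · exact distinct j i h heq.symm

theorem exists_vector_seq_not_mix_of_lower_dim (d : ℕ) (hd : 1 ≤ d) :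
    ∃ F : ℕ → List ℕ, (∀ n, (F n).length = d) ∧
      ∀ (G : ℕ → List ℕ) (e : ℕ), 1 ≤ e → e < d →
        (∀ n, (G n).length = e) → ¬ IsMix F G :=
  exists_vector_seq_not_mix_of_lower_dim_general d
end

section
/- Let X, Y ⊆ 2* be sets of nodes such that the set of branches visiting both X and Y infinitely often has positive coin-tossing measure. Then there exist X' ⊆ X and Y' ⊆ Y such that between any two comparable nodes x < y of Y' there is a node u with x < u < y and u ∈ X', and moreover the set of branches visiting both X' and Y' infinitely often has positive measure. -/
open MeasureTheory ENNReal

/-!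
Keep `X' = X` and let `Y'` be the greedy selection from `Y`: a node of `Y` is kept when an
`X`-node lies strictly between it and each kept strict prefix. Then no measure theory is
needed: if a branch visits `X` and `Y` infinitely often but passes through only finitely
many kept nodes, all of length at most `N`, take an `X`-node `x` on the branch longer than
`N` and a `Y`-node `y` on the branch longer than `x`; then `x` separates `y` from every kept
prefix, so `y` is kept, a contradiction. Hence the event only grows when `Y` is replaced
by `Y'`.
-/

lemma List.IsPrefix.length_lt {α : Type*} {l₁ l₂ : List α} (h : l₁ <+: l₂) (hne : l₁ ≠ l₂) :
    l₁.length < l₂.length :=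
  h.length_le.lt_of_ne fun hl => hne (h.eq_of_length hl)

section Cylinder

variable {π : ℕ → Bool} {z w : List Bool}

lemma mem_cylinder_of_prefix (h : z <+: w) (hw : π ∈ cylinder w) : π ∈ cylinder z := by
  intro i
  simpa [List.get_eq_getElem, h.getElem i.2] using hw ⟨i, i.2.trans_le h.length_le⟩

lemma prefix_of_mem_cylinder_s12 (hz : π ∈ cylinder z) (hw : π ∈ cylinder w)
    (h : z.length ≤ w.length) : z <+: w := by
  refine ⟨w.drop z.length, List.ext_getElem (by simp [Nat.add_sub_cancel' h]) ?_⟩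
  intro i _ _
  by_cases hi : i < z.length
  · have hzi := hz ⟨i, hi⟩
    have hwi := hw ⟨i, hi.trans_le h⟩
    simp_all
  · simp only [List.getElem_append, hi, dite_false, List.getElem_drop]
    congr 1
    omega

lemma visitsIO_iff {S : Set (List Bool)} :
    visitsIO S π ↔ ∀ N : ℕ, ∃ z ∈ S, π ∈ cylinder z ∧ N < z.length := by
  constructor
  · intro h N
    have hinj : Set.InjOn List.length {z ∈ S | π ∈ cylinder z} := fun a ha b hb hab =>
      (prefix_of_mem_cylinder_s12 ha.2 hb.2 hab.le).eq_of_length hab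
    obtain ⟨_, ⟨z, hz, rfl⟩, hNz⟩ := (h.image hinj).exists_gt N
    exact ⟨z, hz.1, hz.2, hNz⟩
  · intro h hfin
    obtain ⟨N, hN⟩ := (hfin.image List.length).bddAbove
    obtain ⟨z, hzS, hzπ, hNz⟩ := h N
    exact hNz.not_ge (hN ⟨z, ⟨hzS, hzπ⟩, rfl⟩)

end Cylinder

section GreedySelection

variable (X Y : Set (List Bool))

def IsGreedyPick : List Bool → Prop := fun y =>
  y ∈ Y ∧ ∀ y', y' <+: y → y' ≠ y → IsGreedyPick y' →
    ∃ u ∈ X, (y' <+: u ∧ y' ≠ u) ∧ (u <+: y ∧ u ≠ y)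
termination_by y => y.length
decreasing_by exact List.IsPrefix.length_lt ‹_› ‹_›

lemma isGreedyPick_iff (y : List Bool) :
    IsGreedyPick X Y y ↔ y ∈ Y ∧ ∀ y', y' <+: y → y' ≠ y → IsGreedyPick X Y y' →
      ∃ u ∈ X, (y' <+: u ∧ y' ≠ u) ∧ (u <+: y ∧ u ≠ y) := by
  rw [IsGreedyPick]

def greedyPicks : Set (List Bool) := {y | IsGreedyPick X Y y}

lemma greedyPicks_subset : greedyPicks X Y ⊆ Y := fun y hy =>
  ((isGreedyPick_iff X Y y).mp hy).1

lemma greedyPicks_separated {x y : List Bool} (hx : x ∈ greedyPicks X Y)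
    (hy : y ∈ greedyPicks X Y) (hxy : x <+: y) (hne : x ≠ y) :
    ∃ u ∈ X, (x <+: u ∧ x ≠ u) ∧ (u <+: y ∧ u ≠ y) :=
  ((isGreedyPick_iff X Y y).mp hy).2 x hxy hne hx

variable {X Y}

lemma visitsIO_greedyPicks {π : ℕ → Bool} (hX : visitsIO X π) (hY : visitsIO Y π) :
    visitsIO (greedyPicks X Y) π := by
  by_contra hfin
  obtain ⟨N, hN⟩ : ∃ N : ℕ, ∀ z ∈ greedyPicks X Y, π ∈ cylinder z → z.length ≤ N := by
    simpa [visitsIO_iff] using hfin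
  obtain ⟨x, hxX, hxπ, hNx⟩ := visitsIO_iff.mp hX N
  obtain ⟨y, hyY, hyπ, hxy⟩ := visitsIO_iff.mp hY x.length
  have hpick : y ∈ greedyPicks X Y := by
    refine (isGreedyPick_iff X Y y).mpr ⟨hyY, fun y' hy'y _ hy' => ?_⟩
    have hy'N := hN y' hy' (mem_cylinder_of_prefix hy'y hyπ)
    refine ⟨x, hxX, ⟨?_, ?_⟩, prefix_of_mem_cylinder_s12 hxπ hyπ hxy.le, ?_⟩
    · exact prefix_of_mem_cylinder_s12 (mem_cylinder_of_prefix hy'y hyπ) hxπ (by omega)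
    · rintro rfl; omega
    · rintro rfl; omega
  exact absurd (hN y hpick hyπ) (by omega)

end GreedySelection

theorem alternating_subsets_general (μ : Measure (ℕ → Bool))
    (X Y : Set (List Bool))
    (h : 0 < μ {π | visitsIO X π ∧ visitsIO Y π}) :
    ∃ X' ⊆ X, ∃ Y' ⊆ Y,
      (∀ x ∈ Y', ∀ y ∈ Y', x <+: y → x ≠ y →
        ∃ u ∈ X', (x <+: u ∧ x ≠ u) ∧ (u <+: y ∧ u ≠ y)) ∧
      0 < μ {π | visitsIO X' π ∧ visitsIO Y' π} :=
  ⟨X, subset_rfl, greedyPicks X Y, greedyPicks_subset X Y,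
    fun _ hx _ hy => greedyPicks_separated X Y hx hy,
    h.trans_le (measure_mono fun _ hπ => ⟨hπ.1, visitsIO_greedyPicks hπ.1 hπ.2⟩)⟩

theorem alternating_subsets (μ : Measure (ℕ → Bool)) [IsProbabilityMeasure μ]
    (hμ : ∀ x : List Bool, μ (cylinder x) = (2 : ℝ≥0∞)⁻¹ ^ x.length)
    (X Y : Set (List Bool))
    (h : 0 < μ {π | visitsIO X π ∧ visitsIO Y π}) :
    ∃ X' ⊆ X, ∃ Y' ⊆ Y,
      (∀ x ∈ Y', ∀ y ∈ Y', x <+: y → x ≠ y →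
        ∃ u ∈ X', (x <+: u ∧ x ≠ u) ∧ (u <+: y ∧ u ≠ y)) ∧
      0 < μ {π | visitsIO X' π ∧ visitsIO Y' π} :=
  alternating_subsets_general μ X Y h
end
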